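/- arXiv:1602.06380 — 3 statements merged into one kernel-verified Lean document; each statement's English description precedes it below -/
import Mathlib

section
/- The circulant digraph H on Z/12Z with connection set {2,3,8} contains no directed Hamiltonian cycle, i.e., there is no cyclic arrangement v_0, v_1, ..., v_11 of all 12 vertices such that each consecutive pair (v_k, v_{k+1 mod 12}) is an arc of H. -/
def H (i j : ZMod 12) : Prop := j - i ∈ ({2, 3, 8} : Finset (ZMod 12))

def nexts (c : ZMod 12) : List (ZMod 12) := [c + 2, c + 3, c + 8]

def search : Nat → List (ZMod 12) → ZMod 12 → Bool
  | 0, _, cur => decide ((0 : ZMod 12) - cur ∈ ({2, 3, 8} : Finset (ZMod 12)))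
  | n + 1, visited, cur =>
      (nexts cur).any (fun x => !(decide (x ∈ visited)) && search n (x :: visited) x)

lemma search_false : search 11 [0] 0 = false := by decide

def vis (w : ZMod 12 → ZMod 12) (m : Nat) : List (ZMod 12) :=
  (List.range m).map (fun i : Nat => w ((i : ZMod 12)))

lemma key (w : ZMod 12 → ZMod 12) (hw : Function.Injective w) (h0 : w 0 = 0)
    (hH : ∀ k : ZMod 12, H (w k) (w (k + 1))) :
    ∀ n : Nat, n ≤ 11 →
      search n (vis w (12 - n)).reverse (w ((11 - n : Nat) : ZMod 12)) = true := by
  intro n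
  induction n with
  | zero =>
    intro _
    simp only [search, decide_eq_true_eq]
    have h := hH 11
    have h12 : (11 : ZMod 12) + 1 = 0 := by decide
    rw [h12, h0] at h
    exact h
  | succ n ih =>
    intro hn
    have hn' : n ≤ 11 := Nat.le_of_succ_le hn
    set cur := w (((11 - (n + 1) : Nat) : ZMod 12)) with hcur
    set x := w (((11 - n : Nat) : ZMod 12)) with hx
    have hstep : ((11 - (n + 1) : Nat) : ZMod 12) + 1 = ((11 - n : Nat) : ZMod 12) := by
      have h : (11 - (n + 1)) + 1 = 11 - n := by omega
      rw [← h]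
      push_cast
      ring
    have hHx : x - cur ∈ ({2, 3, 8} : Finset (ZMod 12)) := by
      have h := hH ((11 - (n + 1) : Nat) : ZMod 12)
      rwa [hstep] at h
    have hmem : x ∈ nexts cur := by
      simp only [Finset.mem_insert, Finset.mem_singleton] at hHx
      simp only [nexts, List.mem_cons, List.not_mem_nil, or_false]
      rcases hHx with h | h | h
      · exact Or.inl (by rw [← h]; ring)
      · exact Or.inr (Or.inl (by rw [← h]; ring))
      · exact Or.inr (Or.inr (by rw [← h]; ring))
    have hnotvis : x ∉ (vis w (12 - (n + 1))).reverse := by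
      simp only [vis, List.mem_reverse, List.mem_map, List.mem_range]
      rintro ⟨i, hi, hwi⟩
      have heq : ((i : Nat) : ZMod 12) = ((11 - n : Nat) : ZMod 12) := hw hwi
      have hiv : i % 12 = (11 - n) % 12 :=
        Nat.ModEq.eq_of_lt_of_lt ((ZMod.natCast_eq_natCast_iff i (11 - n) 12).mp heq)
          (by omega) (by omega) |>.symm ▸ rfl
      omega
    have hvis' : vis w (12 - n) = vis w (12 - (n + 1)) ++ [x] := by
      have hrange : (12 - n) = (12 - (n + 1)) + 1 := by omega
      rw [vis, hrange, List.range_succ, List.map_append]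
      simp only [List.map_cons, List.map_nil]
      rw [← vis]
      have h2 : 12 - (n + 1) = 11 - n := by omega
      rw [h2]
    have ihn := ih hn'
    rw [hvis', List.reverse_append] at ihn
    simp only [List.reverse_cons, List.reverse_nil, List.nil_append, List.cons_append,
      List.nil_append] at ihn
    simp only [search, List.any_eq_true]
    refine ⟨x, hmem, ?_⟩
    rw [Bool.and_eq_true, Bool.not_eq_true']
    exact ⟨decide_eq_false hnotvis, ihn⟩

theorem stmt_3 :
    ¬ ∃ v : ZMod 12 ≃ ZMod 12, ∀ k : ZMod 12, H (v k) (v (k + 1)) := by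
  rintro ⟨v, hv⟩
  set t := v.symm 0 with ht
  set w : ZMod 12 → ZMod 12 := fun k => v (k + t) with hwdef
  have hw : Function.Injective w := fun a b hab => by
    have := v.injective hab
    simpa using this
  have h0 : w 0 = 0 := by simp [hwdef, ht]
  have hH : ∀ k : ZMod 12, H (w k) (w (k + 1)) := by
    intro k
    have := hv (k + t)
    simpa [hwdef, add_right_comm] using this
  have hkey := key w hw h0 hH 11 (le_refl _)
  have hvis1 : (vis w (12 - 11)).reverse = [0] := by
    simp [vis, List.range, List.range.loop, h0]
  have hcast : ((11 - 11 : Nat) : ZMod 12) = 0 := by norm_num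
  rw [hvis1, hcast, h0, search_false] at hkey
  exact Bool.false_ne_true hkey
end

section
/- There is no function d : ZMod 12 → ZMod 12 with d(k) ∈ {2,3,8} for all k such that the partial sums s(0)=0, s(k+1)=s(k)+d(k) are pairwise distinct for k = 0,...,11 and s(12) = 0 in ZMod 12; equivalently, no sequence of 12 steps each equal to 2, 3, or 8 modulo 12 visits all 12 residues and returns to the start. -/
def good : ZMod 12 → List (ZMod 12) → ℕ → Bool
  | c, _, 0 => decide (c = 0)
  | c, vis, n + 1 =>
    ([2, 3, 8] : List (ZMod 12)).any fun t =>
      (decide (n = 0) || !(vis.contains (c + t))) && good (c + t) ((c + t) :: vis) n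

lemma good_false : good 0 [0] 12 = false := by decide

lemma sound (d : ZMod 12 → ZMod 12) (s : ℕ → ZMod 12)
    (h1 : ∀ k : ZMod 12, d k ∈ ({2, 3, 8} : Set (ZMod 12)))
    (h3 : ∀ k : ℕ, k < 12 → s (k + 1) = s k + d (k : ZMod 12))
    (h4 : ∀ k l : ℕ, k < 12 → l < 12 → k ≠ l → s k ≠ s l)
    (h5 : s 12 = 0) :
    ∀ n k, k + n = 12 → ∀ vis : List (ZMod 12),
      (∀ x ∈ vis, ∃ j ≤ k, x = s j) → good (s k) vis n = true := by
  intro n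
  induction n with
  | zero =>
    intro k hk vis _
    have : k = 12 := by omega
    subst this
    simp [good, h5]
  | succ n ih =>
    intro k hk vis hvis
    have hk' : k < 12 := by omega
    have hd := h1 (k : ZMod 12)
    simp only [good, List.any_eq_true, List.mem_cons, List.mem_singleton,
      Bool.and_eq_true, Bool.or_eq_true, decide_eq_true_eq, Bool.not_eq_true']
    refine ⟨d (k : ZMod 12), ?_, ?_, ?_⟩
    · simpa using hd
    · rcases Nat.eq_zero_or_pos n with hn | hn
      · exact Or.inl hn
      · right
        rw [← h3 k hk']
        rw [Bool.eq_false_iff]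
        intro hmem
        rw [List.contains_eq_any_beq, List.any_eq_true] at hmem
        obtain ⟨x, hxmem, hbeq⟩ := hmem
        obtain ⟨j, hj, hx⟩ := hvis _ hxmem
        rw [hx, beq_iff_eq] at hbeq
        have hx := hbeq
        exact h4 (k + 1) j (by omega) (by omega) (by omega) hx
    · rw [← h3 k hk']
      apply ih (k + 1) (by omega)
      intro x hx
      rcases List.mem_cons.mp hx with h | h
      · exact ⟨k + 1, le_refl _, h⟩
      · obtain ⟨j, hj, hx⟩ := hvis _ h
        exact ⟨j, by omega, hx⟩

theorem stmt_4 :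
    ¬ ∃ (d : ZMod 12 → ZMod 12) (s : ℕ → ZMod 12),
      (∀ k : ZMod 12, d k ∈ ({2, 3, 8} : Set (ZMod 12))) ∧
      s 0 = 0 ∧
      (∀ k : ℕ, k < 12 → s (k + 1) = s k + d (k : ZMod 12)) ∧
      (∀ k l : ℕ, k < 12 → l < 12 → k ≠ l → s k ≠ s l) ∧
      s 12 = 0 := by
  rintro ⟨d, s, h1, h2, h3, h4, h5⟩
  have h := sound d s h1 h3 h4 h5 12 0 rfl [0]
    (by intro x hx; simp at hx; exact ⟨0, le_refl _, by rw [hx, h2]⟩)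
  rw [h2] at h
  rw [good_false] at h
  exact Bool.false_ne_true h
end

section
/- The weakened form of Jackson's conjecture with bound 4k instead of 4k+1 is also false: there exists a 3-diregular oriented graph on exactly 4·3 = 12 vertices with no directed Hamiltonian cycle. -/
/-!
The witness is the Cayley digraph of `ℤ/12` with connection set `{2, 3, 8}`. Its regularity
and orientation are general facts about Cayley digraphs (`S` and `-S` are disjoint). A
Hamiltonian cycle can be rotated to start at `0`, and a depth-first search over the three
successors of each vertex, evaluated by the kernel, shows that no cycle starts there.
-/

open Finset

section CayleyDigraph

variable {G : Type*} [AddGroup G] [DecidableEq G]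

def cayleyArc (S : Finset G) (i j : G) : Bool := decide (j - i ∈ S)

theorem cayleyArc_not_and_symm {S : Finset G} (hS : ∀ s ∈ S, -s ∉ S) (i j : G) :
    ¬ (cayleyArc S i j ∧ cayleyArc S j i) := by
  rintro ⟨hij, hji⟩
  simp only [cayleyArc, decide_eq_true_eq] at hij hji
  exact hS _ hij (by rwa [neg_sub])

variable [Fintype G] (S : Finset G)

theorem card_filter_cayleyArc_left (v : G) :
    (univ.filter fun j => cayleyArc S v j).card = S.card := by
  have : (univ.filter fun j => cayleyArc S v j) = S.map (Equiv.subRight v).symm.toEmbedding := by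
    ext j
    simp [cayleyArc, mem_map_equiv]
  rw [this, card_map]

theorem card_filter_cayleyArc_right (v : G) :
    (univ.filter fun i => cayleyArc S i v).card = S.card := by
  have : (univ.filter fun i => cayleyArc S i v) = S.map (Equiv.subLeft v).symm.toEmbedding := by
    ext i
    simp [cayleyArc, mem_map_equiv]
  rw [this, card_map]

end CayleyDigraph

section HamiltonianSearch

variable {α : Type*} [DecidableEq α] (succ : α → List α) (a : α)

/-- `extendsToCycle succ a n visited x` holds iff some walk `x → y₁ → ⋯ → yₙ → a` along
`succ` has its `yᵢ` distinct and outside `visited`. -/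
def extendsToCycle : ℕ → List α → α → Bool
  | 0, _, x => decide (a ∈ succ x)
  | n + 1, visited, x => (succ x).any fun y =>
      decide (y ∉ visited) && extendsToCycle n (y :: visited) y

theorem extendsToCycle_of_isChain (l : List α) (x : α) (visited : List α)
    (hchain : (x :: l ++ [a]).IsChain fun x y => y ∈ succ x) (hl : l.Nodup)
    (hvisited : ∀ y ∈ l, y ∉ visited) : extendsToCycle succ a l.length visited x = true := by
  induction l generalizing x visited with
  | nil => simpa [extendsToCycle] using hchain
  | cons y l ih =>
    simp only [List.cons_append, List.isChain_cons_cons] at hchain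
    rw [List.nodup_cons] at hl
    have hrest : extendsToCycle succ a l.length (y :: visited) y = true :=
      ih y _ hchain.2 hl.2 fun z hz hz' => by
        rcases List.mem_cons.1 hz' with rfl | hz'
        · exact hl.1 hz
        · exact hvisited z (by simp [hz]) hz'
    simp only [List.length_cons, extendsToCycle, List.any_eq_true, Bool.and_eq_true,
      decide_eq_true_eq]
    exact ⟨y, hchain.1, hvisited y (by simp), hrest⟩

theorem extendsToCycle_of_hamiltonian {n : ℕ} (v : ZMod (n + 1) ≃ α)
    (hv : ∀ k, v (k + 1) ∈ succ (v k)) : extendsToCycle succ (v 0) n [v 0] (v 0) = true := by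
  set l := (List.range n).map fun i : ℕ => v ((i + 1 : ℕ) : ZMod (n + 1))
  have hchain : (v 0 :: l ++ [v 0]).IsChain fun x y => y ∈ succ x := by
    have h := (List.isChain_map (R := fun x y => y ∈ succ x) (fun i : ℕ => v i)).2
      ((List.isChain_range_succ _ (n + 1)).2 fun m _ => by simpa using hv m)
    rwa [List.range_succ, List.range_succ_eq_map, List.cons_append, List.map_cons,
      List.map_append, List.map_map, List.map_singleton, Nat.cast_zero, ZMod.natCast_self] at h
  have hl : l.Nodup := by
    refine List.Nodup.map_on (fun i hi j hj hij => ?_) List.nodup_range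
    rw [List.mem_range] at hi hj
    have := (ZMod.natCast_eq_natCast_iff' _ _ _).1 (v.injective hij)
    rw [Nat.mod_eq_of_lt (by omega), Nat.mod_eq_of_lt (by omega)] at this
    omega
  have hvisited : ∀ y ∈ l, y ∉ [v 0] := by
    simp only [l, List.mem_map, List.mem_range, List.mem_singleton]
    rintro _ ⟨i, hi, rfl⟩ h
    rw [v.injective.eq_iff, ZMod.natCast_eq_zero_iff] at h
    exact absurd (Nat.le_of_dvd (by omega) h) (by omega)
  simpa [l] using extendsToCycle_of_isChain succ (v 0) l (v 0) [v 0] hchain hl hvisited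

end HamiltonianSearch

theorem exists_rotation_apply_zero {α : Type*} {m : ℕ} {R : α → α → Prop} (v : ZMod m ≃ α)
    (hv : ∀ k, R (v k) (v (k + 1))) (a : α) :
    ∃ w : ZMod m ≃ α, w 0 = a ∧ ∀ k, R (w k) (w (k + 1)) :=
  ⟨(Equiv.addRight (v.symm a)).trans v, by simp,
    fun k => by simpa [add_right_comm] using hv (k + v.symm a)⟩

theorem stmt_9 :
    ∃ arc : ZMod 12 → ZMod 12 → Bool,
      Fintype.card (ZMod 12) = 4 * 3 ∧
      (∀ v : ZMod 12, (Finset.univ.filter (fun j => arc v j)).card = 3) ∧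
      (∀ v : ZMod 12, (Finset.univ.filter (fun i => arc i v)).card = 3) ∧
      (∀ i j : ZMod 12, ¬ (arc i j ∧ arc j i)) ∧
      ¬ ∃ v : ZMod 12 ≃ ZMod 12, ∀ k : ZMod 12, arc (v k) (v (k + 1)) := by
  let S : Finset (ZMod 12) := {2, 3, 8}
  have hS : S.card = 3 := rfl
  refine ⟨cayleyArc S, ZMod.card 12, fun v => (card_filter_cayleyArc_left S v).trans hS,
    fun v => (card_filter_cayleyArc_right S v).trans hS,
    cayleyArc_not_and_symm (by decide), ?_⟩
  rintro ⟨v, hv⟩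
  let succ : ZMod 12 → List (ZMod 12) := fun x => [x + 2, x + 3, x + 8]
  have hsucc : ∀ x y, cayleyArc S x y → y ∈ succ x := by decide
  obtain ⟨w, hw0, hw⟩ := exists_rotation_apply_zero (R := fun x y => y ∈ succ x)
    v (fun k => hsucc _ _ (hv k)) 0
  have hsearch := extendsToCycle_of_hamiltonian succ w hw
  rw [hw0] at hsearch
  exact absurd hsearch (by decide)
end
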